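/- For all real numbers a, b with a ≥ b > 0, setting λ := (a−b)/(a+b), the error of Ramanujan's approximation satisfies p(a,b) − p_R(a,b) ≤ (14/11)·(22/7 − π)·(a+b)·λ^10. -/

import Mathlib

open Real Finset ComplexConjugate MeasureTheory

/-- The perimeter of an ellipse with semi-axes `a ≥ b > 0`. -/
noncomputable def ellipsePerimeter (a b : ℝ) : ℝ :=
  4 * ∫ φ in (0:ℝ)..(Real.pi / 2), Real.sqrt (a ^ 2 * Real.sin φ ^ 2 + b ^ 2 * Real.cos φ ^ 2)

/-- Ramanujan's approximation to the perimeter of an ellipse. -/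
noncomputable def ramanujanPerimeter (a b : ℝ) : ℝ :=
  Real.pi * ((a + b) + 3 * (a - b) ^ 2 / (10 * (a + b) + Real.sqrt (a ^ 2 + 14 * a * b + b ^ 2)))

/-! Scaling reduces the theorem to `a = 1 + l`, `b = 1 - l` with `|l| < 1`. For
`w = l e^{2iφ}` the integrand of the perimeter is `|1 - w| = |√(1 - w)|²`; expanding
`√(1 - w) = ∑ cₖ wᵏ` and integrating term by term gives `p = 2π ∑ cₖ² l^{2k}`, while
Ramanujan's formula is `π (2 + ∑ rₘ l^{2m+2})` with `rₘ` the coefficients of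
`3 / (5 + √(1 - 3y/4))`. So `p - p_R = π ∑ dₖ l^{2k}` where `dₖ = 0` for `k < 5` and `dₖ ≥ 0`,
hence `p - p_R ≤ π l¹⁰ ∑ dₖ`. Finally `∑ dₖ = 2 ∑ cₖ² - 2 - ∑ rₘ ≤ 8/π - 2 - 6/11`: the bound
`∑ cₖ² ≤ 4/π` follows from `p(1 + l, 1 - l) ≤ 8` by letting `l → 1`, and `∑ rₘ = 6/11` is the
value at `y = 1`. -/

-- `√(1 - x) = ∑ sqrtCoeff k * x ^ k`
noncomputable def sqrtCoeff : ℕ → ℝ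
  | 0 => 1
  | k + 1 => sqrtCoeff k * (2 * k - 1) / (2 * k + 2)

-- `3 / (5 + √(1 - 3y/4)) = ∑ ramanujanCoeff m * y ^ m`; the recurrence is this identity multiplied
-- by `24 + 3y/4 = 25 - (1 - 3y/4)`
noncomputable def ramanujanCoeff : ℕ → ℝ
  | 0 => 1 / 2
  | m + 1 => (-4 * sqrtCoeff (m + 1) * (3 / 4) ^ (m + 1) - ramanujanCoeff m) / 32

noncomputable def ramanujanErrorCoeff : ℕ → ℝ
  | 0 => 0
  | k + 1 => 2 * sqrtCoeff (k + 1) ^ 2 - ramanujanCoeff k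

theorem Ring.choose_succ_eq_mul_div {K : Type*} [Field K] [CharZero K]
    (a : K) (k : ℕ) : Ring.choose a (k + 1) = Ring.choose a k * (a - k) / (k + 1) := by
  rw [Ring.choose_eq_smul, Ring.choose_eq_smul, descPochhammer_succ_right, Polynomial.smeval_mul]
  simp only [Nat.factorial_succ, Nat.cast_mul, Nat.cast_add, Nat.cast_one, mul_inv_rev,
    Polynomial.smeval_sub, Polynomial.smeval_X, pow_one, Polynomial.smeval_natCast, pow_zero,
    nsmul_eq_mul, mul_one, smul_eq_mul]
  field_simp

theorem hasSum_mul_pow_le_pow_mul {d : ℕ → ℝ} {N : ℕ} {x s S : ℝ} (hd : ∀ k, 0 ≤ d k)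
    (hN : ∀ k < N, d k = 0) (hx0 : 0 ≤ x) (hx1 : x ≤ 1) (hs : HasSum (fun k => d k * x ^ k) s)
    (hS : HasSum d S) : s ≤ x ^ N * S := by
  refine hasSum_le (fun k => ?_) hs (hS.mul_left (x ^ N))
  rcases lt_or_ge k N with hk | hk
  · simp [hN k hk]
  · rw [mul_comm]
    exact mul_le_mul_of_nonneg_right (pow_le_pow_of_le_one hx0 hx1 hk) (hd k)

lemma sqrtCoeff_eq_choose (k : ℕ) : sqrtCoeff k = (-1) ^ k * Ring.choose (1 / 2 : ℝ) k := by
  induction k with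
  | zero => simp [sqrtCoeff]
  | succ k ih =>
    rw [sqrtCoeff, ih, Ring.choose_succ_eq_mul_div]
    field_simp
    ring

lemma hasSum_sqrtCoeff_mul_pow {w : ℂ} (hw : ‖w‖ < 1) :
    HasSum (fun k => (sqrtCoeff k : ℂ) * w ^ k) ((1 - w) ^ (1 / 2 : ℂ)) := by
  have h := Complex.one_add_cpow_hasFPowerSeriesOnBall_zero (a := 1 / 2).hasSum
    (y := -w) (by simpa [enorm_eq_nnnorm, ← NNReal.coe_lt_one] using hw)
  simp only [binomialSeries, FormalMultilinearSeries.ofScalars_apply_eq, smul_eq_mul] at h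
  rw [zero_add, ← sub_eq_add_neg] at h
  have hterm (k : ℕ) : Ring.choose (1 / 2 : ℂ) k * (-w) ^ k = sqrtCoeff k * w ^ k := by
    rw [sqrtCoeff_eq_choose, neg_pow]
    push_cast
    ring
  simpa only [hterm] using h

lemma hasSum_sqrtCoeff_mul_pow_real {x : ℝ} (hx : |x| < 1) :
    HasSum (fun k => sqrtCoeff k * x ^ k) (√(1 - x)) := by
  have h := Real.one_add_rpow_hasFPowerSeriesOnBall_zero (a := 1 / 2).hasSum
    (y := -x) (by simpa [enorm_eq_nnnorm, ← NNReal.coe_lt_one] using hx)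
  simp only [binomialSeries, FormalMultilinearSeries.ofScalars_apply_eq, smul_eq_mul] at h
  rw [zero_add, ← sub_eq_add_neg, ← Real.sqrt_eq_rpow] at h
  have hterm (k : ℕ) : Ring.choose (1 / 2 : ℝ) k * (-x) ^ k = sqrtCoeff k * x ^ k := by
    rw [sqrtCoeff_eq_choose, neg_pow]
    ring
  simpa only [hterm] using h

lemma sqrtCoeff_neg {k : ℕ} (hk : k ≠ 0) : sqrtCoeff k < 0 := by
  induction k with
  | zero => exact absurd rfl hk
  | succ k ih =>
    rcases eq_or_ne k 0 with rfl | hk0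
    · norm_num [sqrtCoeff]
    · have : (1 : ℝ) ≤ k := by exact_mod_cast Nat.one_le_iff_ne_zero.mpr hk0
      rw [sqrtCoeff]
      exact div_neg_of_neg_of_pos (mul_neg_of_neg_of_pos (ih hk0) (by linarith)) (by positivity)

lemma abs_sqrtCoeff_le_one (k : ℕ) : |sqrtCoeff k| ≤ 1 := by
  induction k with
  | zero => simp [sqrtCoeff]
  | succ k ih =>
    have hk : (0 : ℝ) ≤ k := k.cast_nonneg
    rw [sqrtCoeff, abs_div, abs_mul, abs_of_pos (by positivity : (0 : ℝ) < 2 * k + 2),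
      div_le_one (by positivity)]
    calc |sqrtCoeff k| * |2 * (k : ℝ) - 1| ≤ 1 * (2 * k + 2) :=
          mul_le_mul ih (abs_le.mpr ⟨by linarith, by linarith⟩) (abs_nonneg _) zero_le_one
      _ = 2 * k + 2 := one_mul _

lemma ramanujanCoeff_nonneg_and_le {m : ℕ} (hm : m ≠ 0) :
    0 ≤ ramanujanCoeff m ∧ ramanujanCoeff m ≤ -sqrtCoeff m * (3 / 4) ^ m / 4 := by
  induction m with
  | zero => exact absurd rfl hm
  | succ m ih =>
    rcases eq_or_ne m 0 with rfl | hm0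
    · norm_num [ramanujanCoeff, sqrtCoeff]
    obtain ⟨ih0, ih1⟩ := ih hm0
    have hc : sqrtCoeff m < 0 := sqrtCoeff_neg hm0
    have hmR : (1 : ℝ) ≤ m := by exact_mod_cast Nat.one_le_iff_ne_zero.mpr hm0
    -- so that `rₘ₊₁ = (-4 cₘ₊₁ (3/4)^(m+1) - rₘ) / 32 ≥ 0`
    have hstep : -sqrtCoeff m * (3 / 4) ^ m / 4 ≤ -4 * sqrtCoeff (m + 1) * (3 / 4) ^ (m + 1) := by
      have hp : (0 : ℝ) < (3 / 4) ^ m := by positivity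
      rw [sqrtCoeff, pow_succ, div_le_iff₀ (by norm_num)]
      rw [show -4 * (sqrtCoeff m * (2 * m - 1) / (2 * m + 2)) * ((3 / 4) ^ m * (3 / 4)) * 4
          = -sqrtCoeff m * (3 / 4) ^ m * (12 * (2 * m - 1) / (2 * m + 2)) by ring]
      have h12 : (1 : ℝ) ≤ 12 * (2 * m - 1) / (2 * m + 2) := by
        rw [le_div_iff₀ (by positivity)]; linarith
      nlinarith
    have hpos : 0 ≤ -sqrtCoeff (m + 1) * (3 / 4) ^ (m + 1) :=
      mul_nonneg (neg_nonneg.mpr (sqrtCoeff_neg m.succ_ne_zero).le) (by positivity)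
    rw [ramanujanCoeff]
    constructor <;> linarith

lemma ramanujanCoeff_nonneg (m : ℕ) : 0 ≤ ramanujanCoeff m := by
  rcases eq_or_ne m 0 with rfl | hm
  · norm_num [ramanujanCoeff]
  · exact (ramanujanCoeff_nonneg_and_le hm).1

lemma ramanujanCoeff_le (m : ℕ) : ramanujanCoeff m ≤ (3 / 4) ^ m := by
  rcases eq_or_ne m 0 with rfl | hm
  · norm_num [ramanujanCoeff]
  · have hc : -sqrtCoeff m ≤ 1 := by linarith [(abs_le.mp (abs_sqrtCoeff_le_one m)).1]
    have hp : (0 : ℝ) < (3 / 4) ^ m := by positivity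
    nlinarith [(ramanujanCoeff_nonneg_and_le hm).2]

lemma neg_sqrtCoeff_mul_le_sq {m : ℕ} (hm : 5 ≤ m) :
    -sqrtCoeff m * (3 / 4) ^ m ≤ 16 * sqrtCoeff (m + 1) ^ 2 := by
  induction m, hm using Nat.le_induction with
  | base => norm_num [sqrtCoeff]
  | succ m hm ih =>
    have hmR : (5 : ℝ) ≤ m := by exact_mod_cast hm
    have hratio : 3 * (2 * (m : ℝ) - 1) / (4 * (2 * m + 2)) ≤ ((2 * m + 1) / (2 * m + 4)) ^ 2 := by
      rw [div_pow, div_le_div_iff₀ (by positivity) (by positivity)]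
      nlinarith
    have hlhs : -sqrtCoeff (m + 1) * (3 / 4) ^ (m + 1)
        = -sqrtCoeff m * (3 / 4) ^ m * (3 * (2 * (m : ℝ) - 1) / (4 * (2 * m + 2))) := by
      rw [sqrtCoeff, pow_succ]; field_simp
    have hrhs : sqrtCoeff (m + 1 + 1) ^ 2
        = sqrtCoeff (m + 1) ^ 2 * ((2 * m + 1) / (2 * m + 4)) ^ 2 := by
      rw [sqrtCoeff]; push_cast; field_simp; ring
    rw [hlhs, hrhs]
    calc -sqrtCoeff m * (3 / 4) ^ m * (3 * (2 * (m : ℝ) - 1) / (4 * (2 * m + 2)))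
        ≤ 16 * sqrtCoeff (m + 1) ^ 2 * (3 * (2 * (m : ℝ) - 1) / (4 * (2 * m + 2))) :=
          mul_le_mul_of_nonneg_right ih (div_nonneg (by linarith) (by positivity))
      _ ≤ 16 * sqrtCoeff (m + 1) ^ 2 * ((2 * m + 1) / (2 * m + 4)) ^ 2 :=
          mul_le_mul_of_nonneg_left hratio (by positivity)
      _ = _ := by ring

lemma ramanujanCoeff_le_two_mul_sq {m : ℕ} (hm : 4 ≤ m) :
    ramanujanCoeff m ≤ 2 * sqrtCoeff (m + 1) ^ 2 := by
  obtain rfl | hm5 := hm.eq_or_lt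
  · norm_num [ramanujanCoeff, sqrtCoeff]
  obtain ⟨m, rfl⟩ : ∃ k, m = k + 1 := ⟨m - 1, by omega⟩
  have := neg_sqrtCoeff_mul_le_sq (m := m + 1) hm5
  rw [ramanujanCoeff]
  linarith [ramanujanCoeff_nonneg m]

lemma ramanujanErrorCoeff_eq_zero {k : ℕ} (hk : k < 5) : ramanujanErrorCoeff k = 0 := by
  interval_cases k <;> norm_num [ramanujanErrorCoeff, ramanujanCoeff, sqrtCoeff]

lemma ramanujanErrorCoeff_nonneg (k : ℕ) : 0 ≤ ramanujanErrorCoeff k := by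
  rcases lt_or_ge k 5 with hk | hk
  · exact (ramanujanErrorCoeff_eq_zero hk).ge
  obtain ⟨k, rfl⟩ : ∃ j, k = j + 1 := ⟨k - 1, by omega⟩
  exact sub_nonneg.mpr (ramanujanCoeff_le_two_mul_sq (by omega))

lemma ellipsePerimeter_mul {t : ℝ} (ht : 0 ≤ t) (a b : ℝ) :
    ellipsePerimeter (t * a) (t * b) = t * ellipsePerimeter a b := by
  have h (φ : ℝ) : √((t * a) ^ 2 * sin φ ^ 2 + (t * b) ^ 2 * cos φ ^ 2)
      = t * √(a ^ 2 * sin φ ^ 2 + b ^ 2 * cos φ ^ 2) := by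
    rw [← sqrt_sq ht, ← sqrt_mul (sq_nonneg t), sqrt_sq ht]
    ring_nf
  simp only [ellipsePerimeter, h, intervalIntegral.integral_const_mul]
  ring

lemma ellipsePerimeter_le {a b : ℝ} (ha : 0 ≤ a) (hb : 0 ≤ b) :
    ellipsePerimeter a b ≤ 4 * (a + b) := by
  have hle : ∀ φ ∈ Set.Icc 0 (π / 2),
      √(a ^ 2 * sin φ ^ 2 + b ^ 2 * cos φ ^ 2) ≤ a * sin φ + b * cos φ := fun φ hφ => by
    have hs : 0 ≤ sin φ := sin_nonneg_of_nonneg_of_le_pi hφ.1 (by linarith [hφ.2, pi_pos])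
    have hc : 0 ≤ cos φ := cos_nonneg_of_mem_Icc ⟨by linarith [hφ.1, pi_pos], hφ.2⟩
    exact sqrt_le_iff.mpr
      ⟨by positivity, by nlinarith [mul_nonneg (mul_nonneg ha hb) (mul_nonneg hs hc)]⟩
  have hint : ∫ φ in (0 : ℝ)..π / 2, (a * sin φ + b * cos φ) = a + b := by
    rw [intervalIntegral.integral_add (Continuous.intervalIntegrable (by fun_prop) _ _)
      (Continuous.intervalIntegrable (by fun_prop) _ _)]
    simp
  have hmono := intervalIntegral.integral_mono_on (μ := volume) (by positivity)
    (Continuous.intervalIntegrable (by fun_prop) _ _)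
    (Continuous.intervalIntegrable (by fun_prop) _ _) hle
  rw [ellipsePerimeter]
  linarith

lemma integral_cos_two_mul_sub (k j : ℕ) :
    ∫ φ in (0 : ℝ)..π / 2, cos (2 * ((k : ℝ) - j) * φ) = if k = j then π / 2 else 0 := by
  split_ifs with hkj
  · simp [hkj]
  have hc : 2 * ((k : ℝ) - j) ≠ 0 := by
    have : (k : ℝ) ≠ j := by exact_mod_cast hkj
    exact mul_ne_zero two_ne_zero (sub_ne_zero.mpr this)
  rw [intervalIntegral.integral_comp_mul_left (fun φ => cos φ) hc, integral_cos,
    show 2 * ((k : ℝ) - j) * (π / 2) = ((k - j : ℤ) : ℝ) * π by push_cast; ring,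
    sin_int_mul_pi]
  simp

lemma summable_norm_sqrtCoeff_mul_pow {w : ℂ} (hw : ‖w‖ < 1) :
    Summable fun k => ‖(sqrtCoeff k : ℂ) * w ^ k‖ := by
  refine (summable_geometric_of_lt_one (norm_nonneg w) hw).of_nonneg_of_le (fun _ => norm_nonneg _)
    fun k => ?_
  rw [norm_mul, norm_pow, Complex.norm_real, Real.norm_eq_abs]
  exact mul_le_of_le_one_left (by positivity) (abs_sqrtCoeff_le_one k)

-- `|1 - w| = |√(1 - w)|² = √(1 - w) · conj √(1 - w)`, expanded as a product of two series
lemma hasSum_norm_one_sub {w : ℂ} (hw : ‖w‖ < 1) :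
    HasSum (fun p : ℕ × ℕ => ((sqrtCoeff p.1 : ℂ) * w ^ p.1) * ((sqrtCoeff p.2 : ℂ) * conj w ^ p.2))
      (‖1 - w‖ : ℂ) := by
  have hS := hasSum_sqrtCoeff_mul_pow hw
  have hS' : HasSum (fun k => (sqrtCoeff k : ℂ) * conj w ^ k) (conj ((1 - w) ^ (1 / 2 : ℂ))) := by
    have he : (fun k => conj ((sqrtCoeff k : ℂ) * w ^ k))
        = fun k => (sqrtCoeff k : ℂ) * conj w ^ k :=
      funext fun k => by rw [map_mul, map_pow, Complex.conj_ofReal]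
    exact he ▸ Complex.hasSum_conj'.mpr hS
  have hw' : ‖conj w‖ < 1 := by rwa [Complex.norm_conj]
  have hsum := summable_mul_of_summable_norm (summable_norm_sqrtCoeff_mul_pow hw)
    (summable_norm_sqrtCoeff_mul_pow hw')
  have hnorm : ‖(1 - w) ^ (1 / 2 : ℂ)‖ ^ 2 = ‖1 - w‖ := by
    rw [show (1 / 2 : ℂ) = ((1 / 2 : ℝ) : ℂ) by push_cast; ring, Complex.norm_cpow_real,
      ← sqrt_eq_rpow, sq_sqrt (norm_nonneg _)]
  have hprod := hS.mul hS' hsum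
  rwa [Complex.mul_conj', ← Complex.ofReal_pow, hnorm] at hprod

lemma sqrt_ellipse_integrand_eq_norm (l φ : ℝ) :
    √((1 + l) ^ 2 * sin φ ^ 2 + (1 - l) ^ 2 * cos φ ^ 2)
      = ‖1 - l * Complex.exp ((2 * φ : ℝ) * Complex.I)‖ := by
  rw [Complex.exp_mul_I, ← Complex.ofReal_cos, ← Complex.ofReal_sin,
    show (1 : ℂ) - l * (cos (2 * φ) + sin (2 * φ) * Complex.I)
      = ((1 - l * cos (2 * φ) : ℝ) : ℂ) + ((-(l * sin (2 * φ)) : ℝ) : ℂ) * Complex.I by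
      push_cast; ring,
    Complex.norm_add_mul_I, cos_two_mul, sin_two_mul]
  congr 1
  linear_combination ((1 + l) ^ 2 - 4 * l ^ 2 * cos φ ^ 2) * sin_sq_add_cos_sq φ

lemma pow_mul_conj_pow_exp (l φ : ℝ) (k j : ℕ) :
    (l * Complex.exp ((2 * φ : ℝ) * Complex.I)) ^ k
        * conj (l * Complex.exp ((2 * φ : ℝ) * Complex.I)) ^ j
      = (l ^ (k + j) : ℝ) * Complex.exp ((2 * ((k : ℝ) - j) * φ : ℝ) * Complex.I) := by
  rw [map_mul, Complex.conj_ofReal, ← Complex.exp_conj, mul_pow, mul_pow, ← Complex.exp_nat_mul,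
    ← Complex.exp_nat_mul]
  simp only [map_mul, Complex.conj_ofReal, Complex.conj_I]
  rw [mul_mul_mul_comm, ← Complex.exp_add]
  push_cast
  ring_nf

lemma hasSum_ellipse_integrand {l : ℝ} (hl : |l| < 1) (φ : ℝ) :
    HasSum (fun p : ℕ × ℕ => sqrtCoeff p.1 * sqrtCoeff p.2 * l ^ (p.1 + p.2)
        * cos (2 * ((p.1 : ℝ) - p.2) * φ))
      (√((1 + l) ^ 2 * sin φ ^ 2 + (1 - l) ^ 2 * cos φ ^ 2)) := by
  have hw : ‖(l : ℂ) * Complex.exp ((2 * φ : ℝ) * Complex.I)‖ < 1 := by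
    rwa [norm_mul, Complex.norm_exp_ofReal_mul_I, mul_one, Complex.norm_real, Real.norm_eq_abs]
  have h := Complex.reCLM.hasSum (hasSum_norm_one_sub hw)
  rw [sqrt_ellipse_integrand_eq_norm]
  convert h using 1
  · funext p
    rw [Complex.reCLM_apply, mul_mul_mul_comm, pow_mul_conj_pow_exp, ← Complex.ofReal_mul,
      ← mul_assoc, ← Complex.ofReal_mul, Complex.re_ofReal_mul, Complex.exp_ofReal_mul_I_re]
  · rw [Complex.reCLM_apply, Complex.ofReal_re]

-- integrating termwise, only the diagonal terms `k = j` survive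
lemma hasSum_ellipsePerimeter {l : ℝ} (hl : |l| < 1) :
    HasSum (fun k => 2 * π * (sqrtCoeff k ^ 2 * (l ^ 2) ^ k))
      (ellipsePerimeter (1 + l) (1 - l)) := by
  have hgeom : Summable fun p : ℕ × ℕ => |l| ^ p.1 * |l| ^ p.2 :=
    have h := summable_geometric_of_lt_one (abs_nonneg l) hl
    h.mul_of_nonneg h (fun _ => by positivity) (fun _ => by positivity)
  have hbound (p : ℕ × ℕ) (φ : ℝ) : ‖sqrtCoeff p.1 * sqrtCoeff p.2 * l ^ (p.1 + p.2)
      * cos (2 * ((p.1 : ℝ) - p.2) * φ)‖ ≤ |l| ^ p.1 * |l| ^ p.2 := by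
    rw [Real.norm_eq_abs, abs_mul, abs_mul, abs_mul, abs_pow, pow_add]
    have h1 := abs_sqrtCoeff_le_one p.1
    have h2 := abs_sqrtCoeff_le_one p.2
    have h3 := abs_cos_le_one (2 * ((p.1 : ℝ) - p.2) * φ)
    have : 0 ≤ |l| ^ p.1 * |l| ^ p.2 := by positivity
    calc _ ≤ 1 * 1 * (|l| ^ p.1 * |l| ^ p.2) * 1 := by gcongr
      _ = _ := by ring
  have hint := intervalIntegral.hasSum_integral_of_dominated_convergence (a := 0) (b := π / 2)
    (μ := volume)
    (F := fun (p : ℕ × ℕ) φ => sqrtCoeff p.1 * sqrtCoeff p.2 * l ^ (p.1 + p.2)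
      * cos (2 * ((p.1 : ℝ) - p.2) * φ))
    (fun p _ => |l| ^ p.1 * |l| ^ p.2)
    (fun p => (by fun_prop : Continuous _).aestronglyMeasurable)
    (fun p => ae_of_all _ fun φ _ => hbound p φ)
    (ae_of_all _ fun _ _ => hgeom) intervalIntegrable_const
    (ae_of_all _ fun φ _ => hasSum_ellipse_integrand hl φ)
  simp only [intervalIntegral.integral_const_mul, integral_cos_two_mul_sub, mul_ite, mul_zero]
    at hint
  rw [← Function.Injective.hasSum_iff (g := fun k : ℕ => (k, k)) (fun _ _ h => (Prod.mk.inj h).1)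
    (fun p hp => if_neg fun h => hp ⟨p.1, Prod.ext rfl h⟩)] at hint
  rw [ellipsePerimeter]
  refine (hint.mul_left 4).congr_fun fun k => ?_
  simp only [Function.comp_apply, if_true]
  ring

lemma ramanujanPerimeter_mul {t : ℝ} (ht : 0 ≤ t) (a b : ℝ) :
    ramanujanPerimeter (t * a) (t * b) = t * ramanujanPerimeter a b := by
  rcases ht.eq_or_lt with rfl | ht
  · simp [ramanujanPerimeter]
  have hsqrt : √((t * a) ^ 2 + 14 * (t * a) * (t * b) + (t * b) ^ 2)
      = t * √(a ^ 2 + 14 * a * b + b ^ 2) := by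
    rw [← sqrt_sq ht.le, ← sqrt_mul (sq_nonneg t), sqrt_sq ht.le]
    ring_nf
  rw [ramanujanPerimeter, ramanujanPerimeter, hsqrt,
    show 10 * (t * a + t * b) + t * √(a ^ 2 + 14 * a * b + b ^ 2)
      = t * (10 * (a + b) + √(a ^ 2 + 14 * a * b + b ^ 2)) by ring,
    show 3 * (t * a - t * b) ^ 2 = t * (t * (3 * (a - b) ^ 2)) by ring,
    mul_div_mul_left _ _ ht.ne']
  ring

lemma ramanujanPerimeter_one_add_one_sub (l : ℝ) :
    ramanujanPerimeter (1 + l) (1 - l) = π * (2 + l ^ 2 * (3 / (5 + √(1 - 3 * l ^ 2 / 4)))) := by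
  have hsqrt : √((1 + l) ^ 2 + 14 * (1 + l) * (1 - l) + (1 - l) ^ 2)
      = 4 * √(1 - 3 * l ^ 2 / 4) := by
    rw [show (1 + l) ^ 2 + 14 * (1 + l) * (1 - l) + (1 - l) ^ 2 = 4 ^ 2 * (1 - 3 * l ^ 2 / 4) by
      ring, sqrt_mul (by norm_num), sqrt_sq (by norm_num)]
  set s := √(1 - 3 * l ^ 2 / 4)
  have hs : 0 ≤ s := sqrt_nonneg _
  have hs5 : 5 + s ≠ 0 := by linarith
  have hs20 : 10 * 2 + 4 * s ≠ 0 := by linarith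
  rw [ramanujanPerimeter, hsqrt, show 1 + l + (1 - l) = 2 by ring,
    show 1 + l - (1 - l) = 2 * l by ring,
    show 3 * (2 * l) ^ 2 / (10 * 2 + 4 * s) = l ^ 2 * (3 / (5 + s)) by field_simp; ring]

lemma hasSum_ramanujanCoeff_mul_pow {y : ℝ} (hy : |y| ≤ 1) :
    HasSum (fun m => ramanujanCoeff m * y ^ m) (3 / (5 + √(1 - 3 * y / 4))) := by
  have hsum : Summable fun m => ramanujanCoeff m * y ^ m := by
    refine Summable.of_norm_bounded (summable_geometric_of_lt_one (by norm_num) (by norm_num :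
      (3 / 4 : ℝ) < 1)) fun m => ?_
    rw [norm_mul, norm_pow, Real.norm_eq_abs, Real.norm_eq_abs,
      abs_of_nonneg (ramanujanCoeff_nonneg m)]
    exact (mul_le_mul (ramanujanCoeff_le m) (pow_le_one₀ (abs_nonneg y) hy) (by positivity)
      (by positivity)).trans_eq (mul_one _)
  obtain ⟨ρ, hρ⟩ := hsum
  have hx : |3 * y / 4| < 1 := by
    obtain ⟨hy₁, hy₂⟩ := abs_le.mp hy
    exact abs_lt.mpr ⟨by linarith, by linarith⟩
  have hc := (hasSum_nat_add_iff' 1).mpr (hasSum_sqrtCoeff_mul_pow_real hx)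
  have hr := (hasSum_nat_add_iff' 1).mpr hρ
  simp only [range_one, sum_singleton, pow_zero, mul_one] at hc hr
  have hcomb := (hr.mul_left 24).add (hρ.mul_left (3 * y / 4))
  have hcomb' := hc.mul_left (-3)
  have heq : 24 * (ρ - ramanujanCoeff 0) + 3 * y / 4 * ρ
      = -3 * (√(1 - 3 * y / 4) - sqrtCoeff 0) := by
    refine hcomb.unique (hcomb'.congr_fun fun m => ?_)
    rw [ramanujanCoeff, mul_div_right_comm, mul_pow, pow_succ y]
    ring
  set s := √(1 - 3 * y / 4)
  have hs : s ^ 2 = 1 - 3 * y / 4 := sq_sqrt (by linarith [(abs_lt.mp hx).2])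
  have hs5 : s < 5 := by nlinarith [(abs_lt.mp hx).1, sqrt_nonneg (1 - 3 * y / 4)]
  -- `heq` says `(24 + 3y/4) ρ = 15 - 3s`, and `24 + 3y/4 = (5 - s) (5 + s)`
  have hfactor : (5 - s) * (ρ * (5 + s) - 3) = 0 := by
    simp only [ramanujanCoeff, sqrtCoeff] at heq
    linear_combination heq - ρ * hs
  have hρ' : ρ = 3 / (5 + s) := eq_div_of_mul_eq (by positivity)
    (sub_eq_zero.mp ((mul_eq_zero.mp hfactor).resolve_left (by linarith)))
  rwa [← hρ']

lemma sum_range_sqrtCoeff_sq_le (N : ℕ) : ∑ k ∈ range N, sqrtCoeff k ^ 2 ≤ 4 / π := by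
  have hbound : ∀ l ∈ Set.Ioo (0 : ℝ) 1, ∑ k ∈ range N, sqrtCoeff k ^ 2 * (l ^ 2) ^ k ≤ 4 / π := by
    intro l hl
    have hl' : |l| < 1 := abs_lt.mpr ⟨by linarith [hl.1], hl.2⟩
    have hsum := sum_le_hasSum (range N) (fun k _ => by positivity) (hasSum_ellipsePerimeter hl')
    have hP := ellipsePerimeter_le (by linarith [hl.1] : 0 ≤ 1 + l) (by linarith [hl.2] : 0 ≤ 1 - l)
    rw [← Finset.mul_sum] at hsum
    rw [le_div_iff₀ pi_pos]
    linarith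
  have hcont : Continuous fun l : ℝ => ∑ k ∈ range N, sqrtCoeff k ^ 2 * (l ^ 2) ^ k := by fun_prop
  have hlim := le_of_tendsto ((hcont.tendsto 1).mono_left nhdsWithin_le_nhds)
    (Filter.mem_of_superset (Ioo_mem_nhdsLT zero_lt_one) hbound)
  simpa using hlim

lemma summable_sqrtCoeff_sq : Summable fun k => sqrtCoeff k ^ 2 :=
  summable_of_sum_range_le (fun _ => sq_nonneg _) sum_range_sqrtCoeff_sq_le

lemma tsum_sqrtCoeff_sq_le : ∑' k, sqrtCoeff k ^ 2 ≤ 4 / π :=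
  Real.tsum_le_of_sum_range_le (fun _ => sq_nonneg _) sum_range_sqrtCoeff_sq_le

lemma hasSum_ramanujanCoeff : HasSum ramanujanCoeff (6 / 11) := by
  have h := hasSum_ramanujanCoeff_mul_pow (y := 1) (by norm_num)
  rw [show (1 : ℝ) - 3 * 1 / 4 = (1 / 2) ^ 2 by norm_num, sqrt_sq (by norm_num)] at h
  norm_num at h
  exact h

lemma hasSum_ramanujanErrorCoeff :
    HasSum ramanujanErrorCoeff (2 * (∑' k, sqrtCoeff k ^ 2 - 1) - 6 / 11) := by
  have hc := (hasSum_nat_add_iff' 1).mpr summable_sqrtCoeff_sq.hasSum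
  simp only [range_one, sum_singleton, sqrtCoeff, one_pow] at hc
  refine (hasSum_nat_add_iff' 1).mp ?_
  simp only [range_one, sum_singleton, ramanujanErrorCoeff, sub_zero]
  exact (hc.mul_left 2).sub hasSum_ramanujanCoeff

lemma hasSum_ellipsePerimeter_sub_ramanujanPerimeter {l : ℝ} (hl : |l| < 1) :
    HasSum (fun k => π * ramanujanErrorCoeff k * (l ^ 2) ^ k)
      (ellipsePerimeter (1 + l) (1 - l) - ramanujanPerimeter (1 + l) (1 - l)) := by
  have hP := (hasSum_nat_add_iff' 1).mpr (hasSum_ellipsePerimeter hl)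
  have hR := hasSum_ramanujanCoeff_mul_pow (y := l ^ 2)
    (by rw [abs_pow, pow_le_one_iff_of_nonneg (abs_nonneg l) two_ne_zero]; exact hl.le)
  refine (hasSum_nat_add_iff' 1).mp ?_
  have h := (hP.sub (hR.mul_left (π * l ^ 2))).congr_fun
    (g := fun k => π * ramanujanErrorCoeff (k + 1) * (l ^ 2) ^ (k + 1)) fun k => by
      rw [ramanujanErrorCoeff, pow_succ (l ^ 2)]; ring
  convert h using 1
  rw [ramanujanPerimeter_one_add_one_sub]
  simp only [range_one, ramanujanErrorCoeff, sqrtCoeff, sum_singleton, mul_zero, pow_zero, mul_one,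
    sub_zero, one_pow]
  ring

lemma ellipsePerimeter_sub_ramanujanPerimeter_le {l : ℝ} (hl : |l| < 1) :
    ellipsePerimeter (1 + l) (1 - l) - ramanujanPerimeter (1 + l) (1 - l)
      ≤ (8 - 28 * π / 11) * l ^ 10 := by
  have hl2 : l ^ 2 ≤ 1 := by nlinarith [abs_nonneg l, sq_abs l]
  have hle := hasSum_mul_pow_le_pow_mul (N := 5)
    (fun k => mul_nonneg pi_pos.le (ramanujanErrorCoeff_nonneg k))
    (fun k hk => by rw [ramanujanErrorCoeff_eq_zero hk, mul_zero]) (sq_nonneg l) hl2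
    (hasSum_ellipsePerimeter_sub_ramanujanPerimeter hl) (hasSum_ramanujanErrorCoeff.mul_left π)
  calc _ ≤ (l ^ 2) ^ 5 * (π * (2 * (∑' k, sqrtCoeff k ^ 2 - 1) - 6 / 11)) := hle
    _ ≤ (l ^ 2) ^ 5 * (π * (2 * (4 / π - 1) - 6 / 11)) := by
      gcongr
      exact tsum_sqrtCoeff_sq_le
    _ = (8 - 28 * π / 11) * l ^ 10 := by
      field_simp
      ring

theorem ramanujan_error_upper_bound (a b : ℝ) (hab : a ≥ b) (hb : b > 0) :
    ellipsePerimeter a b - ramanujanPerimeter a b ≤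
      (14 / 11) * (22 / 7 - Real.pi) * (a + b) * ((a - b) / (a + b)) ^ 10 := by
  have hsum : 0 < a + b := by linarith
  set l := (a - b) / (a + b) with hl
  have hl1 : |l| < 1 := by
    rw [hl, abs_div, abs_of_pos hsum, div_lt_one hsum, abs_lt]
    constructor <;> linarith
  have ht : 0 ≤ (a + b) / 2 := by positivity
  have ha : (a + b) / 2 * (1 + l) = a := by rw [hl]; field_simp; ring
  have hb' : (a + b) / 2 * (1 - l) = b := by rw [hl]; field_simp; ring
  calc ellipsePerimeter a b - ramanujanPerimeter a b
      = (a + b) / 2 * (ellipsePerimeter (1 + l) (1 - l) - ramanujanPerimeter (1 + l) (1 - l)) := by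
        rw [mul_sub, ← ellipsePerimeter_mul ht, ← ramanujanPerimeter_mul ht, ha, hb']
    _ ≤ (a + b) / 2 * ((8 - 28 * π / 11) * l ^ 10) :=
        mul_le_mul_of_nonneg_left (ellipsePerimeter_sub_ramanujanPerimeter_le hl1) ht
    _ = 14 / 11 * (22 / 7 - π) * (a + b) * l ^ 10 := by ring
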